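/- Let 0 ≤ b < a with a > 1 and a ≡ b (mod 2). For any digit string u over {0,…,a−1}, let j ∈ {0,1} and digit string v be determined by the unique run of the division-by-2 transducer in base a starting at state 0 (transitions i·a + digit_in = digit_out·2 + next_state). If the run on u ends in state 0, then [u] is even and [v] = [u]/2 = f'_{a,b}([u]). If the run ends in state 1, then [u] is odd and [v·((a+b)/2)] = (a·[u] + b)/2 = f'_{a,b}([u]), where v·((a+b)/2) denotes v with the extra digit (a+b)/2 appended. (Here [w] is the base-a value, most significant digit first.) -/
import Mathlib


/-- Accelerated function: `m / 2` if `m` even, `(a * m + b) / 2` if odd. -/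
def fab' (a b : ℕ) : ℕ → ℕ := fun m => if Even m then m / 2 else (a * m + b) / 2

/-- Deterministic run of the division-by-`d` transducer in base `a`,
returning the final state and the output word. From state `i` on input
digit `c` it outputs `(i * a + c) / d` and moves to `(i * a + c) % d`. -/
def divRun (a d : ℕ) : ℕ → List ℕ → ℕ × List ℕ
  | i, [] => (i, [])
  | i, c :: u =>
      let p := divRun a d ((i * a + c) % d) u
      (p.1, (i * a + c) / d :: p.2)

/-- Base-`a` value, most significant digit first. -/
def msbVal (a : ℕ) : List ℕ → ℕ
  | [] => 0
  | c :: w => c * a ^ w.length + msbVal a w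

lemma divRun_len (a : ℕ) (i : ℕ) (u : List ℕ) :
    (divRun a 2 i u).2.length = u.length := by
  induction u generalizing i with
  | nil => rfl
  | cons c u ih => simp [divRun, ih]

lemma divRun_inv (a : ℕ) (i : ℕ) (u : List ℕ) :
    2 * msbVal a (divRun a 2 i u).2 + (divRun a 2 i u).1
      = i * a ^ u.length + msbVal a u := by
  induction u generalizing i with
  | nil => simp [divRun, msbVal]
  | cons c u ih =>
    have h := ih ((i * a + c) % 2)
    have hdm : 2 * ((i * a + c) / 2) + (i * a + c) % 2 = i * a + c :=
      Nat.div_add_mod _ 2 ▸ by omega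
    have h2 : (2 * ((i * a + c) / 2) + (i * a + c) % 2) * a ^ u.length
        = (i * a + c) * a ^ u.length := by rw [hdm]
    simp only [divRun, msbVal, divRun_len, List.length_cons, pow_succ]
    nlinarith [h, h2]

lemma msbVal_append_one (a : ℕ) (v : List ℕ) (c : ℕ) :
    msbVal a (v ++ [c]) = msbVal a v * a + c := by
  induction v with
  | nil => simp [msbVal]
  | cons d v ih =>
    simp [msbVal, ih]
    ring

theorem div2_run_realizes_fab' (a b : ℕ) (ha : 1 < a) (hb : b < a)
    (hpar : a % 2 = b % 2) (u : List ℕ) (hu : ∀ x ∈ u, x < a) :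
    ((divRun a 2 0 u).1 = 0 →
        Even (msbVal a u) ∧
        msbVal a (divRun a 2 0 u).2 = msbVal a u / 2 ∧
        msbVal a (divRun a 2 0 u).2 = fab' a b (msbVal a u)) ∧
    ((divRun a 2 0 u).1 = 1 →
        Odd (msbVal a u) ∧
        msbVal a ((divRun a 2 0 u).2 ++ [(a + b) / 2]) = (a * msbVal a u + b) / 2 ∧
        msbVal a ((divRun a 2 0 u).2 ++ [(a + b) / 2]) = fab' a b (msbVal a u)) := by
  have h := divRun_inv a 0 u
  simp only [Nat.zero_mul, Nat.zero_add] at h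
  have hab : (a + b) % 2 = 0 := by omega
  constructor
  · intro h0
    rw [h0] at h
    have heven : Even (msbVal a u) := ⟨msbVal a (divRun a 2 0 u).2, by omega⟩
    refine ⟨heven, by omega, ?_⟩
    simp [fab', heven]; omega
  · intro h1
    rw [h1] at h
    have hodd : Odd (msbVal a u) := ⟨msbVal a (divRun a 2 0 u).2, by omega⟩
    have key : msbVal a ((divRun a 2 0 u).2 ++ [(a + b) / 2])
        = (a * msbVal a u + b) / 2 := by
      have hm : a * msbVal a u = 2 * (msbVal a (divRun a 2 0 u).2 * a) + a := by
        rw [← h]; ring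
      rw [msbVal_append_one]
      omega
    refine ⟨hodd, key, ?_⟩
    rw [key, fab']
    simp only [Nat.even_iff, Nat.odd_iff.mp hodd]
    norm_num
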